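/- Let B : X → X be a bounded linear operator, extended to ℓ^∞(X) by (Bx)_n = B x_n and hence to a bounded operator B̄ on Y = ℓ^∞(X)/c₀(X). Then the spectrum of B̄ on Y equals the spectrum of B on X. -/

import Mathlib

set_option linter.unusedSectionVars false

open Filter Topology
open scoped ENNReal

noncomputable section

variable (X : Type*) [NormedAddCommGroup X] [NormedSpace ℂ X] [CompleteSpace X]

/-- `ℓ^∞(X)`: the Banach space of bounded sequences in `X` with the sup norm. -/
abbrev Linf : Type _ := ↥(lp (fun _ : ℕ => X) ∞)

/-- `c₀(X)`: the subspace of `ℓ^∞(X)` of sequences converging to `0`. -/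
def czero : Submodule ℂ (Linf X) where
  carrier := {f | Tendsto (fun n => f n) atTop (𝓝 (0 : X))}
  add_mem' := by
    intro f g hf hg
    simpa [lp.coeFn_add] using hf.add hg
  zero_mem' := by
    simp [lp.coeFn_zero]
  smul_mem' := by
    intro c f hf
    simpa [lp.coeFn_smul] using hf.const_smul c

instance : IsClosed ((czero X : Set (Linf X))) := by
  rw [← isSeqClosed_iff_isClosed]
  intro F f hF hFf
  show Tendsto (fun n => f n) atTop (𝓝 (0 : X))
  rw [Metric.tendsto_atTop]
  intro ε hε
  obtain ⟨k, hk⟩ := (Metric.tendsto_atTop.mp hFf (ε / 2) (by linarith)).imp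
    (fun k h => h k le_rfl)
  have hFk : Tendsto (fun n => (F k) n) atTop (𝓝 (0 : X)) := hF k
  obtain ⟨N, hN⟩ := Metric.tendsto_atTop.mp hFk (ε / 2) (by linarith)
  refine ⟨N, fun n hn => ?_⟩
  have h1 : ‖f n - (F k) n‖ ≤ ‖f - F k‖ := by
    have := lp.norm_apply_le_norm (ENNReal.top_ne_zero) (f - F k) n
    simpa [lp.coeFn_sub] using this
  have h2 : ‖f - F k‖ < ε / 2 := by
    rw [← dist_eq_norm] at *
    rw [dist_comm]
    exact hk
  have h3 : ‖(F k) n‖ < ε / 2 := by simpa [dist_eq_norm] using hN n hn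
  have : ‖f n‖ ≤ ‖f n - (F k) n‖ + ‖(F k) n‖ := by
    calc ‖f n‖ = ‖(f n - (F k) n) + (F k) n‖ := by rw [sub_add_cancel]
      _ ≤ ‖f n - (F k) n‖ + ‖(F k) n‖ := norm_add_le _ _
  · simp only [dist_eq_norm, sub_zero]
    calc ‖f n‖ ≤ ‖f n - (F k) n‖ + ‖(F k) n‖ := this
      _ < ε / 2 + ε / 2 := by exact add_lt_add (lt_of_le_of_lt h1 h2) h3
      _ = ε := by ring

/-- The quotient space `Y = ℓ^∞(X)/c₀(X)`. -/
abbrev YY := (Linf X) ⧸ (czero X)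

/-- The shift, as a map of bounded sequences. -/
def shiftFun (f : Linf X) : Linf X :=
  ⟨fun n => f (n + 1), memℓp_infty ⟨‖f‖, by
    rintro r ⟨n, rfl⟩
    exact lp.norm_apply_le_norm ENNReal.top_ne_zero f (n + 1)⟩⟩

@[simp] lemma shiftFun_apply (f : Linf X) (n : ℕ) : (shiftFun X f) n = f (n + 1) := rfl

/-- The shift operator `S` on `ℓ^∞(X)`, `(Sx)ₙ = x_{n+1}`. -/
def shiftL : Linf X →L[ℂ] Linf X :=
  LinearMap.mkContinuous
    { toFun := shiftFun X
      map_add' := fun _ _ => rfl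
      map_smul' := fun _ _ => rfl }
    1
    (fun f => by
      simp only [one_mul, LinearMap.coe_mk, AddHom.coe_mk]
      exact lp.norm_le_of_forall_le (norm_nonneg f)
        (fun n => lp.norm_apply_le_norm ENNReal.top_ne_zero f (n + 1)))

@[simp] lemma shiftL_apply (f : Linf X) (n : ℕ) : (shiftL X f) n = f (n + 1) := rfl

lemma shift_mem_czero {f : Linf X} (hf : f ∈ czero X) : shiftL X f ∈ czero X := by
  have : Tendsto (fun n => f (n + 1)) atTop (𝓝 (0 : X)) :=
    hf.comp (tendsto_add_atTop_nat 1)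
  exact this

/-- The reduced shift operator `S̄` on `Y = ℓ^∞(X)/c₀(X)`, as a linear map. -/
def SbarLin : YY X →ₗ[ℂ] YY X :=
  Submodule.liftQ (czero X) ((czero X).mkQ.comp (shiftL X).toLinearMap)
    (by
      intro f hf
      simp only [LinearMap.mem_ker, LinearMap.comp_apply, Submodule.mkQ_apply,
        ContinuousLinearMap.coe_coe, Submodule.Quotient.mk_eq_zero]
      exact shift_mem_czero X hf)

lemma SbarLin_mk (f : Linf X) :
    SbarLin X (Submodule.Quotient.mk f) = Submodule.Quotient.mk (shiftL X f) := rfl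

/-- The reduced shift operator `S̄` on `Y = ℓ^∞(X)/c₀(X)`. -/
def Sbar : YY X →L[ℂ] YY X :=
  (SbarLin X).mkContinuous 1 (by
    intro y
    rw [one_mul]
    refine le_of_forall_pos_le_add (fun ε hε => ?_)
    obtain ⟨m, rfl, hm⟩ := Submodule.Quotient.norm_mk_lt y hε
    rw [SbarLin_mk]
    calc ‖(Submodule.Quotient.mk (shiftL X m) : YY X)‖ ≤ ‖shiftL X m‖ :=
          Submodule.Quotient.norm_mk_le _ _
      _ ≤ ‖m‖ := lp.norm_le_of_forall_le (norm_nonneg m)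
            (fun n => lp.norm_apply_le_norm ENNReal.top_ne_zero m (n + 1))
      _ ≤ ‖(Submodule.Quotient.mk m : YY X)‖ + ε := hm.le)

lemma Sbar_mk (f : Linf X) :
    Sbar X (Submodule.Quotient.mk f) = Submodule.Quotient.mk (shiftL X f) := rfl

/-- The function `g(λ) = R(λ, S̄) x̄ = (λ - S̄)⁻¹ x̄`. -/
def gfun (x : Linf X) (z : ℂ) : YY X :=
  (resolvent (Sbar X) z) (Submodule.Quotient.mk x)

/-- The spectrum `σ(x)` of a bounded sequence `x`: the set of points `z₀ ∈ ℂ` such that the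
holomorphic function `g(λ) = R(λ, S̄) x̄` (defined for `|λ| ≠ 1`) admits no holomorphic extension
to a neighborhood of `z₀`. -/
def seqSpectrum (x : Linf X) : Set ℂ :=
  {z₀ : ℂ | ¬ ∃ (U : Set ℂ) (h : ℂ → YY X), IsOpen U ∧ z₀ ∈ U ∧ AnalyticOnNhd ℂ h U ∧
      ∀ z ∈ U, ‖z‖ ≠ 1 → h z = gfun X x z}

/-- The extension of an operator `B` on `X` to `ℓ^∞(X)`, acting coordinatewise. -/
def BextFun (B : X →L[ℂ] X) (f : Linf X) : Linf X :=
  ⟨fun n => B (f n), memℓp_infty ⟨‖B‖ * ‖f‖, by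
    rintro r ⟨n, rfl⟩
    exact (B.le_opNorm _).trans
      (mul_le_mul_of_nonneg_left (lp.norm_apply_le_norm ENNReal.top_ne_zero f n)
        (norm_nonneg B))⟩⟩

@[simp] lemma BextFun_apply (B : X →L[ℂ] X) (f : Linf X) (n : ℕ) :
    (BextFun X B f) n = B (f n) := rfl

/-- The extension of `B` to `ℓ^∞(X)` as a bounded operator, `(Bx)ₙ = B xₙ`. -/
def Bext (B : X →L[ℂ] X) : Linf X →L[ℂ] Linf X :=
  LinearMap.mkContinuous
    { toFun := BextFun X B
      map_add' := by
        intro f g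
        apply Subtype.ext
        funext n
        show B ((f + g) n) = B (f n) + B (g n)
        have : (f + g) n = f n + g n := by rw [lp.coeFn_add]; rfl
        rw [this, map_add]
      map_smul' := by
        intro c f
        apply Subtype.ext
        funext n
        show B ((c • f) n) = c • B (f n)
        have : (c • f) n = c • f n := by rw [lp.coeFn_smul]; rfl
        rw [this, map_smul] }
    ‖B‖
    (fun f => by
      simp only [LinearMap.coe_mk, AddHom.coe_mk]
      refine lp.norm_le_of_forall_le (mul_nonneg (norm_nonneg B) (norm_nonneg f)) fun n => ?_
      exact (B.le_opNorm _).trans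
        (mul_le_mul_of_nonneg_left (lp.norm_apply_le_norm ENNReal.top_ne_zero f n)
          (norm_nonneg B)))

@[simp] lemma Bext_apply (B : X →L[ℂ] X) (f : Linf X) (n : ℕ) :
    (Bext X B f) n = B (f n) := rfl

lemma Bext_mem_czero (B : X →L[ℂ] X) {f : Linf X} (hf : f ∈ czero X) :
    Bext X B f ∈ czero X := by
  have hf' : Tendsto (fun n => f n) atTop (𝓝 (0 : X)) := hf
  have : Tendsto (fun n => B (f n)) atTop (𝓝 (B (0 : X))) :=
    (B.continuous.tendsto 0).comp hf'
  rw [map_zero] at this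
  exact this

/-- The operator induced by `B` on the quotient `Y = ℓ^∞(X)/c₀(X)`, as a linear map. -/
def BbarLin (B : X →L[ℂ] X) : YY X →ₗ[ℂ] YY X :=
  Submodule.liftQ (czero X) ((czero X).mkQ.comp (Bext X B).toLinearMap)
    (by
      intro f hf
      simp only [LinearMap.mem_ker, LinearMap.comp_apply, Submodule.mkQ_apply,
        ContinuousLinearMap.coe_coe, Submodule.Quotient.mk_eq_zero]
      exact Bext_mem_czero X B hf)

lemma BbarLin_mk (B : X →L[ℂ] X) (f : Linf X) :
    BbarLin X B (Submodule.Quotient.mk f) = Submodule.Quotient.mk (Bext X B f) := rfl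

/-- The operator induced by `B` on the quotient `Y = ℓ^∞(X)/c₀(X)`. -/
def Bbar (B : X →L[ℂ] X) : YY X →L[ℂ] YY X :=
  (BbarLin X B).mkContinuous ‖B‖ (by
    intro y
    refine le_of_forall_pos_le_add (fun ε hε => ?_)
    have hδ : 0 < ε / (‖B‖ + 1) := by positivity
    obtain ⟨m, rfl, hm⟩ := Submodule.Quotient.norm_mk_lt y hδ
    rw [BbarLin_mk]
    have hB : (0:ℝ) ≤ ‖B‖ := norm_nonneg B
    have h0 : ‖Bext X B m‖ ≤ ‖B‖ * ‖m‖ :=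
      lp.norm_le_of_forall_le (mul_nonneg hB (norm_nonneg m)) fun n =>
        (B.le_opNorm _).trans
          (mul_le_mul_of_nonneg_left (lp.norm_apply_le_norm ENNReal.top_ne_zero m n) hB)
    have h1 : ‖(Submodule.Quotient.mk (Bext X B m) : YY X)‖ ≤ ‖B‖ * ‖m‖ :=
      (Submodule.Quotient.norm_mk_le _ _).trans h0
    have h2 : ‖B‖ * ‖m‖ ≤ ‖B‖ * (‖(Submodule.Quotient.mk m : YY X)‖ + ε / (‖B‖ + 1)) :=
      mul_le_mul_of_nonneg_left hm.le hB
    have hp : (0:ℝ) < ‖B‖ + 1 := by positivity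
    have h3 : ‖B‖ * (ε / (‖B‖ + 1)) ≤ ε := by
      rw [mul_div_assoc', div_le_iff₀ hp]
      nlinarith
    have h4 : ‖B‖ * (‖(Submodule.Quotient.mk m : YY X)‖ + ε / (‖B‖ + 1))
        = ‖B‖ * ‖(Submodule.Quotient.mk m : YY X)‖ + ‖B‖ * (ε / (‖B‖ + 1)) := mul_add _ _ _
    linarith)

lemma Bbar_mk (B : X →L[ℂ] X) (f : Linf X) :
    Bbar X B (Submodule.Quotient.mk f) = Submodule.Quotient.mk (Bext X B f) := rfl

/-!
`B ↦ B̄` is a unital algebra homomorphism, so it maps units to units and `σ(B̄) ⊆ σ(B)`.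
Conversely, constant sequences embed `X` isometrically into `Y`, and `B̄` acts on their classes
as `B`. Hence if `B̄` is invertible, it is bounded below and so is `B`; and solving `B̄ ȳ = x̄`
for a constant `x` gives `B y_n → x`, so `B` has dense range. A bounded-below operator with
dense range on a Banach space is invertible.
-/

theorem AlgHom.spectrum_apply_eq_of_reflects_isUnit {R A B : Type*} [CommSemiring R] [Ring A]
    [Ring B] [Algebra R A] [Algebra R B] (φ : A →ₐ[R] B) (hφ : ∀ a, IsUnit (φ a) → IsUnit a)
    (a : A) : spectrum R (φ a) = spectrum R a :=
  (AlgHom.spectrum_apply_subset φ a).antisymm fun r hr hφr =>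
    hr (hφ _ (by rwa [map_sub, AlgHom.commutes]))

lemma Bbar_mul (A B : X →L[ℂ] X) : Bbar X (A * B) = Bbar X A * Bbar X B :=
  ContinuousLinearMap.coe_injective <| Submodule.linearMap_qext _ rfl

lemma Bbar_one : Bbar X 1 = 1 :=
  ContinuousLinearMap.coe_injective <| Submodule.linearMap_qext _ rfl

lemma Bbar_add (A B : X →L[ℂ] X) : Bbar X (A + B) = Bbar X A + Bbar X B :=
  ContinuousLinearMap.coe_injective <| Submodule.linearMap_qext _ rfl

lemma Bbar_smul (c : ℂ) (A : X →L[ℂ] X) : Bbar X (c • A) = c • Bbar X A :=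
  ContinuousLinearMap.coe_injective <| Submodule.linearMap_qext _ rfl

def BbarAlgHom : (X →L[ℂ] X) →ₐ[ℂ] (YY X →L[ℂ] YY X) :=
  AlgHom.ofLinearMap ⟨⟨Bbar X, Bbar_add X⟩, Bbar_smul X⟩ (Bbar_one X) (Bbar_mul X)

def constLinf (x : X) : Linf X :=
  ⟨fun _ => x, memℓp_infty ⟨‖x‖, by rintro r ⟨n, rfl⟩; exact le_rfl⟩⟩

lemma Bbar_mk_constLinf (A : X →L[ℂ] X) (x : X) :
    Bbar X A (Submodule.Quotient.mk (constLinf X x)) =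
      Submodule.Quotient.mk (constLinf X (A x)) :=
  rfl

lemma tendsto_of_mk_eq_mk_constLinf {f : Linf X} {x : X}
    (h : (Submodule.Quotient.mk f : YY X) = Submodule.Quotient.mk (constLinf X x)) :
    Tendsto (fun n => f n) atTop (𝓝 x) := by
  have hmem : Tendsto (fun n => (f - constLinf X x) n) atTop (𝓝 0) :=
    (Submodule.Quotient.eq _).1 h
  simpa only [lp.coeFn_sub, Pi.sub_apply, constLinf, tendsto_sub_nhds_zero_iff] using hmem

lemma norm_mk_constLinf (x : X) :
    ‖(Submodule.Quotient.mk (constLinf X x) : YY X)‖ = ‖x‖ := by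
  refine le_antisymm ((Submodule.Quotient.norm_mk_le _ _).trans ?_) ?_
  · exact lp.norm_le_of_forall_le (norm_nonneg x) fun _ => le_rfl
  · refine QuotientAddGroup.le_norm_iff.2 fun f hf => ?_
    exact le_of_tendsto' (tendsto_of_mk_eq_mk_constLinf X hf).norm
      (lp.norm_apply_le_norm ENNReal.top_ne_zero f)

lemma antilipschitzWith_of_antilipschitzWith_Bbar {A : X →L[ℂ] X} {c : NNReal}
    (h : AntilipschitzWith c (Bbar X A)) : AntilipschitzWith c A :=
  A.antilipschitz_of_bound fun x => by
    simpa only [norm_mk_constLinf, Bbar_mk_constLinf] using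
      (Bbar X A).bound_of_antilipschitz h (Submodule.Quotient.mk (constLinf X x))

lemma denseRange_of_surjective_Bbar {A : X →L[ℂ] X} (h : Function.Surjective (Bbar X A)) :
    DenseRange A := fun x => by
  obtain ⟨y, hy⟩ := h (Submodule.Quotient.mk (constLinf X x))
  obtain ⟨f, rfl⟩ := Submodule.Quotient.mk_surjective _ y
  exact mem_closure_of_tendsto (tendsto_of_mk_eq_mk_constLinf X hy)
    (Eventually.of_forall fun n => Set.mem_range_self (f n))

lemma isUnit_of_isUnit_Bbar {A : X →L[ℂ] X} (h : IsUnit (Bbar X A)) : IsUnit A := by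
  rw [ContinuousLinearMap.isUnit_iff_bijective] at h ⊢
  obtain ⟨-, c, hc⟩ := (Bbar X A).bijective_iff_dense_range_and_antilipschitz.1 h
  refine A.bijective_iff_dense_range_and_antilipschitz.2
    ⟨?_, c, antilipschitzWith_of_antilipschitzWith_Bbar X hc⟩
  exact Submodule.dense_iff_topologicalClosure_eq_top.1 (denseRange_of_surjective_Bbar X h.2)

/-- The spectrum of the operator `B̄` induced on `Y = ℓ^∞(X)/c₀(X)` by a
bounded operator `B` on `X` (acting coordinatewise) equals the spectrum of `B` on `X`. -/
theorem spectrum_Bbar_eq_spectrum (B : X →L[ℂ] X) :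
    spectrum ℂ (Bbar X B) = spectrum ℂ B :=
  (BbarAlgHom X).spectrum_apply_eq_of_reflects_isUnit (fun _ => isUnit_of_isUnit_Bbar X) B
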